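/- arXiv:2203.15017 — 5 statements merged into one kernel-verified Lean document; each statement's English description precedes it below -/
import Mathlib

section
/- Let S = k[x₁, x₂] be a polynomial ring over a field k and let f ∈ (x₁, x₂). Let D_f = S⁴ with endomorphism given by the matrix with rows (0, x₁, x₂, f), (0, 0, 0, −x₂), (0, 0, 0, x₁), (0, 0, 0, 0), and let D₀ be the same with f = 0. Then d_f² = 0 and D_f is isomorphic as a differential module to D₀. -/
/-!
Write `f = a x₁ + b x₂`. Then `d_f (e₄ - a e₂ - b e₃) = (f - a x₁ - b x₂) e₁ - x₂ e₂ + x₁ e₃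
= -x₂ e₂ + x₁ e₃`, while `d_f` agrees with `d₀` on `e₁, e₂, e₃`; so in the basis
`e₁, e₂, e₃, e₄ - a e₂ - b e₃` the matrix of `d_f` is that of `d₀`, i.e. a unipotent matrix
conjugates `d_f` into `d₀`.
-/

open MvPolynomial

/-- The matrix `D_f` with rows `(0, x₁, x₂, f)`, `(0, 0, 0, −x₂)`, `(0, 0, 0, x₁)`,
`(0, 0, 0, 0)` over `S = k[x₁, x₂]`. -/
noncomputable def Dmat {k : Type} [Field k] (f : MvPolynomial (Fin 2) k) :
    Matrix (Fin 4) (Fin 4) (MvPolynomial (Fin 2) k) :=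
  !![0, X 0, X 1, f;
     0, 0,   0,   -X 1;
     0, 0,   0,   X 0;
     0, 0,   0,   0]

namespace Matrix

variable {R n : Type*} [CommRing R] [Fintype n] [DecidableEq n]

theorem toLin'_comp_toLin'_eq_zero {A : Matrix n n R} (h : A * A = 0) :
    toLin' A ∘ₗ toLin' A = 0 := by
  rw [← toLin'_mul, h, map_zero]

theorem exists_linearEquiv_toLin'_comp_eq {A B P Q : Matrix n n R} (hPQ : P * Q = 1)
    (h : A * P = P * B) :
    ∃ φ : (n → R) ≃ₗ[R] (n → R), toLin' A ∘ₗ φ.toLinearMap = φ.toLinearMap ∘ₗ toLin' B :=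
  ⟨P.toLinearEquiv' (invertibleOfRightInverse P Q hPQ), by
    rw [toLinearEquiv'_apply, ← toLin'_mul, ← toLin'_mul, h]⟩

end Matrix

section

variable {R : Type*} [Ring R]

def Pmat (a b : R) : Matrix (Fin 4) (Fin 4) R :=
  !![1, 0, 0, 0;
     0, 1, 0, a;
     0, 0, 1, b;
     0, 0, 0, 1]

theorem Pmat_mul_Pmat_neg (a b : R) : Pmat a b * Pmat (-a) (-b) = 1 := by
  ext i j : 1
  fin_cases i <;> fin_cases j <;> simp [Pmat, Matrix.mul_apply, Fin.sum_univ_four]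

end

variable {k : Type} [Field k]

theorem Dmat_mul_self (f : MvPolynomial (Fin 2) k) : Dmat f * Dmat f = 0 := by
  ext i j : 1
  fin_cases i <;> fin_cases j <;> simp [Dmat, Matrix.mul_apply, Fin.sum_univ_four, mul_comm]

theorem Dmat_zero_mul_Pmat (a b : MvPolynomial (Fin 2) k) :
    Dmat 0 * Pmat a b = Pmat a b * Dmat (a * X 0 + b * X 1) := by
  ext i j : 1
  fin_cases i <;> fin_cases j <;> simp [Dmat, Pmat, Matrix.mul_apply, Fin.sum_univ_four, mul_comm]

/-- for `f ∈ (x₁, x₂)`, the endomorphism `d_f` squares to zero and the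
differential module `D_f = (S⁴, d_f)` is isomorphic as a differential module to
`D₀` (the same module with `f = 0`). -/
theorem stmt5 (k : Type) [Field k] (f : MvPolynomial (Fin 2) k)
    (hf : f ∈ Ideal.span {(X 0 : MvPolynomial (Fin 2) k), X 1}) :
    (Matrix.toLin' (Dmat f) ∘ₗ Matrix.toLin' (Dmat f) = 0) ∧
    ∃ φ : (Fin 4 → MvPolynomial (Fin 2) k) ≃ₗ[MvPolynomial (Fin 2) k]
        (Fin 4 → MvPolynomial (Fin 2) k),
      Matrix.toLin' (Dmat (0 : MvPolynomial (Fin 2) k)) ∘ₗ φ.toLinearMap =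
        φ.toLinearMap ∘ₗ Matrix.toLin' (Dmat f) := by
  obtain ⟨a, b, rfl⟩ := Ideal.mem_span_pair.mp hf
  exact ⟨Matrix.toLin'_comp_toLin'_eq_zero (Dmat_mul_self _),
    Matrix.exists_linearEquiv_toLin'_comp_eq (Pmat_mul_Pmat_neg a b) (Dmat_zero_mul_Pmat a b)⟩
end

section
/- Let R be a commutative ring, let (F, d) be a differential module over the polynomial ring R, let S = R[x] be a polynomial extension in one new variable x, and let F' = (F ⊗_R S) ⊕ (F ⊗_R S) with endomorphism d' given in block form by rows (−d⊗S, x·id) and (0, d⊗S). Suppose R = k[x₁,…,x_{n−1}], S = k[x₁,…,x_n], x = x_n, and d is a matrix with entries in R. Then (d')² = 0 and the homology of (F', d') is isomorphic to the homology of (F, d) as an R-module (equivalently ker(d')/im(d') ≅ ker(d)/im(d)). -/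
open MvPolynomial Polynomial

/-- The mapping cone differential: on `(Fin m → S) × (Fin m → S)` the block matrix
with rows `(−A, x·id)` and `(0, A)`, where `A` acts via `Matrix.toLin'`. -/
noncomputable def coneDiff (S : Type*) [CommRing S] {m : ℕ}
    (A : Matrix (Fin m) (Fin m) S) (x : S) :
    ((Fin m → S) × (Fin m → S)) →ₗ[S] (Fin m → S) × (Fin m → S) :=
  LinearMap.prod
    (-(Matrix.toLin' A) ∘ₗ LinearMap.fst S _ _ + x • LinearMap.snd S _ _)
    ((Matrix.toLin' A) ∘ₗ LinearMap.snd S _ _)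

/-- The statement that the homologies `ker ⧸ im` of two differential modules over `R`
are isomorphic as `R`-modules. -/
def HomologyIso {R M N : Type*} [CommRing R] [AddCommGroup M] [Module R M]
    [AddCommGroup N] [Module R N] (dM : M →ₗ[R] M) (dN : N →ₗ[R] N) : Prop :=
  Nonempty ((LinearMap.ker dM ⧸ (LinearMap.range dM).comap (LinearMap.ker dM).subtype)
    ≃ₗ[R] (LinearMap.ker dN ⧸ (LinearMap.range dN).comap (LinearMap.ker dN).subtype))

/-! `F'` is the cone of multiplication by `x` on `F[x]`, and `x` is a non-zero-divisor with
`F[x] / x F[x] = F`, so `F'` should be quasi-isomorphic to `F`. Concretely, `(a, b) ↦ a(0)` sends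
cycles of `d'` (`d a = x b`, `d b = 0`) onto cycles of `d`, with `v ↦ (v, 0)` as a section. A cycle
`(a, b)` is a boundary iff `a(0) = d u` is: then `(-u, (a - a(0)) / x)` is a preimage, and its
second component is forced because `x` can be cancelled from `x • d((a - a(0)) / x) = x • b`. -/

open Matrix

theorem coneDiff_apply {S : Type*} [CommRing S] {m : ℕ} (A : Matrix (Fin m) (Fin m) S) (x : S)
    (z : (Fin m → S) × (Fin m → S)) :
    coneDiff S A x z = (-(A *ᵥ z.1) + x • z.2, A *ᵥ z.2) :=
  rfl

theorem coneDiff_comp_self {S : Type*} [CommRing S] {m : ℕ} {A : Matrix (Fin m) (Fin m) S}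
    (hA : A * A = 0) (x : S) : coneDiff S A x ∘ₗ coneDiff S A x = 0 := by
  have hAA (v : Fin m → S) : A *ᵥ (A *ᵥ v) = 0 := by simp [mulVec_mulVec, hA]
  refine LinearMap.ext fun z => ?_
  simp [coneDiff_apply, mulVec_add, mulVec_neg, mulVec_smul, hAA]

theorem mem_ker_coneDiff {S : Type*} [CommRing S] {m : ℕ} {A : Matrix (Fin m) (Fin m) S} {x : S}
    {z : (Fin m → S) × (Fin m → S)} :
    z ∈ LinearMap.ker (coneDiff S A x) ↔ A *ᵥ z.1 = x • z.2 ∧ A *ᵥ z.2 = 0 := by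
  simp [coneDiff_apply, Prod.ext_iff, neg_add_eq_zero]

theorem HomologyIso.of_map_ker_eq {R M N : Type*} [CommRing R] [AddCommGroup M] [Module R M]
    [AddCommGroup N] [Module R N] {dM : M →ₗ[R] M} {dN : N →ₗ[R] N} (g : M →ₗ[R] N)
    (hg : (LinearMap.ker dM).map g = LinearMap.ker dN)
    (hg_range : ∀ x ∈ LinearMap.ker dM, g x ∈ LinearMap.range dN ↔ x ∈ LinearMap.range dM) :
    HomologyIso dM dN := by
  have hmaps (x) (hx : x ∈ LinearMap.ker dM) : g x ∈ LinearMap.ker dN :=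
    hg ▸ Submodule.mem_map_of_mem hx
  let f := ((LinearMap.range dN).comap (LinearMap.ker dN).subtype).mkQ ∘ₗ g.restrict hmaps
  have hf_surj : Function.Surjective f := by
    refine (Submodule.mkQ_surjective _).comp fun y => ?_
    obtain ⟨x, hx, hxy⟩ : (y : N) ∈ (LinearMap.ker dM).map g := by rw [hg]; exact y.2
    exact ⟨⟨x, hx⟩, Subtype.ext hxy⟩
  have hf_ker : LinearMap.ker f = (LinearMap.range dM).comap (LinearMap.ker dM).subtype := by
    ext x
    simpa [f] using hg_range x x.2
  exact ⟨(Submodule.quotEquivOfEq _ _ hf_ker.symm).trans (f.quotKerEquivOfSurjective hf_surj)⟩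

namespace Polynomial

variable {R : Type*} [CommRing R] {m : ℕ}

theorem constantCoeff_comp_mulVec_map_C (M : Matrix (Fin m) (Fin m) R) (a : Fin m → R[X]) :
    constantCoeff ∘ (M.map C *ᵥ a) = M *ᵥ (constantCoeff ∘ a) := by
  funext i
  simp [RingHom.map_mulVec, Matrix.map_map, Function.comp_def]

theorem mulVec_map_C_comp_C (M : Matrix (Fin m) (Fin m) R) (v : Fin m → R) :
    M.map C *ᵥ (C ∘ v) = C ∘ (M *ᵥ v) := by
  funext i
  exact (RingHom.map_mulVec C M v i).symm

theorem C_comp_constantCoeff_add_X_smul_divX (a : Fin m → R[X]) :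
    C ∘ (constantCoeff ∘ a : Fin m → R) + (X : R[X]) • (divX ∘ a) = a := by
  funext i
  rw [Pi.add_apply, add_comm]
  exact X_mul_divX_add (a i)

noncomputable def coneConstantCoeff (R : Type*) [CommRing R] (m : ℕ) :
    ((Fin m → R[X]) × (Fin m → R[X])) →ₗ[R] (Fin m → R) :=
  (lcoeff R 0).compLeft (Fin m) ∘ₗ LinearMap.fst R _ _

theorem coneConstantCoeff_apply (z : (Fin m → R[X]) × (Fin m → R[X])) :
    coneConstantCoeff R m z = constantCoeff ∘ z.1 :=
  rfl

variable (M : Matrix (Fin m) (Fin m) R)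

theorem map_ker_coneDiff :
    (LinearMap.ker ((coneDiff R[X] (M.map C) X).restrictScalars R)).map (coneConstantCoeff R m) =
      LinearMap.ker (toLin' M) := by
  ext v
  simp only [LinearMap.ker_restrictScalars, Submodule.mem_map, Submodule.restrictScalars_mem,
    mem_ker_coneDiff]
  rw [LinearMap.mem_ker, toLin'_apply]
  constructor
  · rintro ⟨⟨a, b⟩, ⟨hab, -⟩, rfl⟩
    rw [coneConstantCoeff_apply, ← constantCoeff_comp_mulVec_map_C, hab]
    funext i
    simp
  · intro hv
    refine ⟨(C ∘ v, 0), ⟨?_, mulVec_zero _⟩, ?_⟩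
    · rw [mulVec_map_C_comp_C, hv, smul_zero]
      funext i
      simp
    · funext i
      simp [coneConstantCoeff_apply]

theorem coneConstantCoeff_mem_range_iff (hM : M * M = 0) {z : (Fin m → R[X]) × (Fin m → R[X])}
    (hz : z ∈ LinearMap.ker (coneDiff R[X] (M.map C) X)) :
    coneConstantCoeff R m z ∈ LinearMap.range (toLin' M) ↔
      z ∈ LinearMap.range (coneDiff R[X] (M.map C) X) := by
  obtain ⟨a, b⟩ := z
  obtain ⟨hab, -⟩ := mem_ker_coneDiff.1 hz
  simp only [coneConstantCoeff_apply, LinearMap.mem_range, toLin'_apply]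
  constructor
  · rintro ⟨u, hu⟩
    have hdecomp := C_comp_constantCoeff_add_X_smul_divX a
    have hdivX : M.map C *ᵥ (divX ∘ a) = b := by
      refine IsSMulRegular.pi (fun _ => isRegular_X.left.isSMulRegular) ?_
      calc (X : R[X]) • (M.map C *ᵥ (divX ∘ a))
          = M.map C *ᵥ (C ∘ (constantCoeff ∘ a)) + X • (M.map C *ᵥ (divX ∘ a)) := by
            rw [mulVec_map_C_comp_C, ← hu, mulVec_mulVec, hM, zero_mulVec]
            simp only [Function.comp_def, Pi.zero_apply, map_zero]
            exact (zero_add _).symm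
        _ = M.map C *ᵥ a := by rw [← mulVec_smul _ (X : R[X]), ← mulVec_add, hdecomp]
        _ = X • b := hab
    refine ⟨(-(C ∘ u), divX ∘ a), ?_⟩
    rw [coneDiff_apply, hdivX, mulVec_neg, neg_neg, mulVec_map_C_comp_C, hu, hdecomp]
  · rintro ⟨⟨p, q⟩, hpq⟩
    refine ⟨-(constantCoeff ∘ p), ?_⟩
    simp only [coneDiff_apply, Prod.mk.injEq] at hpq
    rw [← hpq.1, mulVec_neg, ← constantCoeff_comp_mulVec_map_C]
    funext i
    simp

theorem homologyIso_coneDiff (hM : M * M = 0) :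
    HomologyIso ((coneDiff R[X] (M.map C) X).restrictScalars R) (toLin' M) :=
  HomologyIso.of_map_ker_eq (coneConstantCoeff R m) (map_ker_coneDiff M) fun _ hz =>
    (coneConstantCoeff_mem_range_iff M hM hz).trans (by rw [LinearMap.range_restrictScalars]; rfl)

end Polynomial

/-- let `R = k[x₁,…,x_n]`, `S = R[x]` a polynomial extension by one new
variable, `d` a square-zero matrix with entries in `R`, and `F' = (F⊗S) ⊕ (F⊗S)` with
block differential `((−d⊗S, x·id), (0, d⊗S))` (the mapping cone of multiplication by
`x` on `F ⊗_R S`).  Then `d'² = 0` and the homology of `(F', d')` is isomorphic to the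
homology of `(F, d)` as an `R`-module. -/
theorem stmt8 (k : Type) [Field k] (n m : ℕ)
    (M : Matrix (Fin m) (Fin m) (MvPolynomial (Fin n) k))
    (hM : M * M = 0) :
    (coneDiff (Polynomial (MvPolynomial (Fin n) k)) (M.map Polynomial.C) Polynomial.X ∘ₗ
      coneDiff (Polynomial (MvPolynomial (Fin n) k)) (M.map Polynomial.C) Polynomial.X = 0) ∧
    HomologyIso
      ((coneDiff (Polynomial (MvPolynomial (Fin n) k)) (M.map Polynomial.C)
          Polynomial.X).restrictScalars (MvPolynomial (Fin n) k))
      (Matrix.toLin' M) :=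
  ⟨coneDiff_comp_self (by rw [← Matrix.map_mul, hM, Matrix.map_zero _ (map_zero _)]) _,
    homologyIso_coneDiff M hM⟩
end

section
/- For each n ≥ 2 there exists a free differential module D over S = k[x₁,…,x_n] of rank 2^{n−1} whose homology ker(d)/im(d) is isomorphic to k = S/(x₁,…,x_n). (Constructed inductively: for n = 2 take S² with differential matrix rows (x₁x₂, −x₂²), (x₁², −x₁x₂); for the inductive step take the mapping cone of multiplication by x_n on the previous differential module base-changed to k[x₁,…,x_n].) -/
/-!
The mapping cone of multiplication by `x` on a differential module `(M, d)` has twice the rank,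
and when `x` is a nonzerodivisor on `H(d)` its homology is `H(d) / x H(d)`: a cycle `(a, b)` of
the cone has `x [b] = 0`, so `b = d c` and `(a, b)` is homologous to `(a + x c, 0)`.
The recursion starts in rank two with the differential `(v, u)ᵀ (u, -v)`, whose homology is
`R / (u, v)` as soon as `v, u` is a regular sequence. In `k[x₁, …, xₙ]` each variable is a
nonzerodivisor modulo the ideal of the others, so adjoining `x₃, …, xₙ` one cone at a time
reaches rank `2 ^ (n - 1)` and homology `k[x₁, …, xₙ] / (x₁, …, xₙ) = k`.
-/

open MvPolynomial

noncomputable section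

open Submodule Pointwise

def Submodule.quotientComapSubtypeEquiv {R M N : Type*} [CommRing R] [AddCommGroup M] [Module R M]
    [AddCommGroup N] [Module R N] (e : M ≃ₗ[R] N) {K B : Submodule R M} {K' B' : Submodule R N}
    (hK : K.map (e : M →ₗ[R] N) = K') (hB : B.map (e : M →ₗ[R] N) = B') :
    (K ⧸ B.comap K.subtype) ≃ₗ[R] K' ⧸ B'.comap K'.subtype :=
  Quotient.equiv _ _ ((e.submoduleMap K).trans (LinearEquiv.ofEq _ _ hK)) <| by
    subst hK hB
    ext
    simp

def Ideal.quotSMulTopEquivQuotientSup {R : Type*} [CommRing R] (I : Ideal R) (x : R) :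
    QuotSMulTop x (R ⧸ I) ≃ₗ[R] R ⧸ (I ⊔ Ideal.span {x}) :=
  Submodule.quotEquivOfEq _ _ (by
    rw [← Ideal.mul_top (Ideal.span {x}), ← Ideal.smul_eq_mul, ideal_span_singleton_smul,
      Submodule.map_pointwise_smul, Submodule.map_top, range_mkQ]) ≪≫ₗ
    quotientQuotientEquivQuotientSup I (Ideal.span {x})

namespace DifferentialModule

variable {R M N : Type*} [CommRing R] [AddCommGroup M] [Module R M] [AddCommGroup N] [Module R N]

abbrev homology (d : M →ₗ[R] M) : Type _ :=
  LinearMap.ker d ⧸ (LinearMap.range d).comap (LinearMap.ker d).subtype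

section Conj

variable (e : M ≃ₗ[R] N) (d : Module.End R M)

lemma map_ker_eq_ker_conj :
    (LinearMap.ker d).map (e : M →ₗ[R] N) = LinearMap.ker (e.conj d) := by
  ext
  simp

lemma map_range_eq_range_conj :
    (LinearMap.range d).map (e : M →ₗ[R] N) = LinearMap.range (e.conj d) := by
  rw [LinearEquiv.conj_apply, LinearMap.range_comp_of_range_eq_top _ (LinearEquiv.range _),
    LinearMap.range_comp]

def homologyConjEquiv : homology d ≃ₗ[R] homology (e.conj d) :=
  quotientComapSubtypeEquiv e (map_ker_eq_ker_conj e d) (map_range_eq_range_conj e d)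

end Conj

section Cone

variable (x : R) {d : M →ₗ[R] M}

variable (d) in
def cone : M × M →ₗ[R] M × M :=
  (d ∘ₗ LinearMap.fst R M M + x • LinearMap.snd R M M).prod (-(d ∘ₗ LinearMap.snd R M M))

@[simp] lemma cone_apply (p : M × M) : cone x d p = (d p.1 + x • p.2, -d p.2) := rfl

lemma cone_comp_self (hd : d ∘ₗ d = 0) : cone x d ∘ₗ cone x d = 0 := by
  have hdd (m : M) : d (d m) = 0 := LinearMap.congr_fun hd m
  ext <;> simp [hdd]

variable (d) in
def coneInl : LinearMap.ker d →ₗ[R] homology (cone x d) :=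
  mkQ _ ∘ₗ LinearMap.codRestrict _ (LinearMap.inl R M M ∘ₗ (LinearMap.ker d).subtype)
    fun u => by simp

lemma coneInl_apply (u : LinearMap.ker d) :
    coneInl x d u = Submodule.Quotient.mk ⟨((u : M), 0), by simp⟩ := rfl

lemma coneInl_surjective (hx : IsSMulRegular (homology d) x) :
    Function.Surjective (coneInl x d) := by
  intro h
  obtain ⟨⟨⟨a, b⟩, hab⟩, rfl⟩ := Submodule.Quotient.mk_surjective _ h
  simp only [LinearMap.mem_ker, cone_apply, Prod.mk_eq_zero, neg_eq_zero] at hab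
  obtain ⟨hab, hb⟩ := hab
  have : (Submodule.Quotient.mk ⟨b, hb⟩ : homology d) = 0 := by
    refine hx.right_eq_zero_of_smul ?_
    rw [← Submodule.Quotient.mk_smul, Submodule.Quotient.mk_eq_zero]
    exact ⟨-a, by simp [eq_neg_of_add_eq_zero_right hab]⟩
  obtain ⟨c, hc : d c = b⟩ := (Submodule.Quotient.mk_eq_zero _).1 this
  refine ⟨⟨a + x • c, by simp [hc, hab]⟩, ?_⟩
  rw [coneInl_apply, Submodule.Quotient.eq]
  exact ⟨(0, c), by simp [hc]⟩

lemma ker_coneInl (hd : d ∘ₗ d = 0) :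
    LinearMap.ker (coneInl x d) =
      (LinearMap.range d).comap (LinearMap.ker d).subtype ⊔ x • ⊤ := by
  apply le_antisymm
  · intro u hu
    obtain ⟨⟨a, b⟩, hab⟩ := (Submodule.Quotient.mk_eq_zero _).1 hu
    change (d a + x • b, -d b) = ((u : M), (0 : M)) at hab
    simp only [Prod.mk.injEq, neg_eq_zero] at hab
    refine mem_sup.2 ⟨⟨d a, LinearMap.congr_fun hd a⟩, ⟨a, rfl⟩, x • ⟨b, hab.2⟩,
      smul_mem_pointwise_smul _ _ _ trivial, Subtype.ext hab.1⟩
  · refine sup_le (fun u ⟨a, ha⟩ => ?_) (fun u hu => ?_)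
    · rw [LinearMap.mem_ker, coneInl_apply, Submodule.Quotient.mk_eq_zero]
      exact ⟨(a, 0), by simpa using ha⟩
    · obtain ⟨w, -, rfl⟩ := mem_smul_pointwise_iff_exists _ _ _ |>.1 hu
      rw [LinearMap.mem_ker, coneInl_apply, Submodule.Quotient.mk_eq_zero]
      exact ⟨(0, w), by simp⟩

def coneHomologyEquiv (hd : d ∘ₗ d = 0) (hx : IsSMulRegular (homology d) x) :
    homology (cone x d) ≃ₗ[R] QuotSMulTop x (homology d) :=
  (LinearMap.quotKerEquivOfSurjective _ (coneInl_surjective x hx)).symm ≪≫ₗ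
    quotEquivOfEq _ _ (ker_coneInl x hd) ≪≫ₗ (quotientQuotientEquivQuotientSup _ _).symm ≪≫ₗ
      quotEquivOfEq _ _ (by rw [map_pointwise_smul, Submodule.map_top, range_mkQ])

end Cone

section Factorization

variable {ι : N →ₗ[R] M} {π : M →ₗ[R] N}

lemma comp_comp_self_eq_zero (hexact : LinearMap.range ι = LinearMap.ker π) :
    (ι ∘ₗ π) ∘ₗ (ι ∘ₗ π) = 0 := by
  have : π ∘ₗ ι = 0 := LinearMap.range_le_ker_iff.1 hexact.le
  rw [LinearMap.comp_assoc, ← LinearMap.comp_assoc π, this, LinearMap.zero_comp,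
    LinearMap.comp_zero]

def homologyEquivOfExact (hι : Function.Injective ι)
    (hexact : LinearMap.range ι = LinearMap.ker π) :
    (N ⧸ LinearMap.range π) ≃ₗ[R] homology (ι ∘ₗ π) :=
  Quotient.equiv _ _ ((LinearEquiv.ofInjective ι hι).trans (LinearEquiv.ofEq _ _
    (hexact.trans (LinearMap.ker_comp_of_ker_eq_bot _ (LinearMap.ker_eq_bot.2 hι)).symm))) <| by
    ext ⟨y, hy⟩
    constructor
    · rintro ⟨_, ⟨m, rfl⟩, h⟩
      exact ⟨m, congrArg Subtype.val h⟩
    · rintro ⟨m, hm⟩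
      exact ⟨π m, ⟨m, rfl⟩, Subtype.ext hm⟩

end Factorization

section RankTwo

variable (u v : R)

-- `pairIncl u v ∘ₗ pairProj u v` has matrix `[[u v, -v²], [u², -u v]]`.
def pairIncl : R →ₗ[R] Fin 2 → R := LinearMap.toSpanSingleton R _ ![v, u]

def pairProj : (Fin 2 → R) →ₗ[R] R := u • LinearMap.proj 0 - v • LinearMap.proj 1

@[simp] lemma pairIncl_apply (t : R) : pairIncl u v t = ![t * v, t * u] := by
  ext i; fin_cases i <;> simp [pairIncl]

@[simp] lemma pairProj_apply (f : Fin 2 → R) : pairProj u v f = u * f 0 - v * f 1 := rfl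

lemma range_pairProj : LinearMap.range (pairProj u v) = Ideal.span {u, v} := by
  ext r
  rw [LinearMap.mem_range, Ideal.mem_span_pair]
  constructor
  · rintro ⟨f, rfl⟩
    exact ⟨f 0, -f 1, by rw [pairProj_apply]; ring⟩
  · rintro ⟨a, b, rfl⟩
    exact ⟨![a, -b], by
      simp only [pairProj_apply, Matrix.cons_val_zero, Matrix.cons_val_one,
        Matrix.cons_val_fin_one]
      ring⟩

variable {u v}

lemma pairIncl_injective (hv : IsSMulRegular R v) : Function.Injective (pairIncl u v) := by
  intro s t hst
  have := congrFun hst 0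
  simp only [pairIncl_apply, Matrix.cons_val_zero] at this
  exact hv (by simpa [smul_eq_mul, mul_comm v] using this)

lemma range_pairIncl (hv : IsSMulRegular R v) (hu : IsSMulRegular (R ⧸ Ideal.span {v}) u) :
    LinearMap.range (pairIncl u v) = LinearMap.ker (pairProj u v) := by
  apply le_antisymm
  · rintro _ ⟨t, rfl⟩
    simp [mul_comm, mul_left_comm]
  · intro f hf
    have hf : u * f 0 = v * f 1 := sub_eq_zero.1 hf
    obtain ⟨t, ht⟩ : ∃ t, t * v = f 0 := Ideal.mem_span_singleton'.1 <|
      mem_of_isSMulRegular_quotient_of_smul_mem hu <|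
        show u * f 0 ∈ _ from hf ▸ Ideal.mul_mem_right _ _ (Ideal.mem_span_singleton_self v)
    have h1 : t * u = f 1 := hv <| show v * (t * u) = v * f 1 by rw [← hf, ← ht]; ring
    exact ⟨t, by ext i; fin_cases i <;> simp [ht, h1]⟩

end RankTwo

variable (R) in
def IsHomologyOfFree (r : ℕ) (Q : Type*) [AddCommGroup Q] [Module R Q] : Prop :=
  ∃ d : (Fin r → R) →ₗ[R] (Fin r → R), d ∘ₗ d = 0 ∧ Nonempty (homology d ≃ₗ[R] Q)

namespace IsHomologyOfFree

variable {r : ℕ} {Q Q' : Type*} [AddCommGroup Q] [Module R Q] [AddCommGroup Q'] [Module R Q']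

lemma of_linearEquiv (e : M ≃ₗ[R] (Fin r → R)) {d : M →ₗ[R] M} (hd : d ∘ₗ d = 0)
    (H : homology d ≃ₗ[R] Q) : IsHomologyOfFree R r Q :=
  ⟨e.conj d, by rw [← LinearEquiv.conj_comp, hd, map_zero],
    ⟨(homologyConjEquiv e d).symm ≪≫ₗ H⟩⟩

lemma congr (h : IsHomologyOfFree R r Q) (e : Q ≃ₗ[R] Q') : IsHomologyOfFree R r Q' :=
  let ⟨d, hd, ⟨H⟩⟩ := h
  ⟨d, hd, ⟨H ≪≫ₗ e⟩⟩

lemma quotSMulTop {x : R} (h : IsHomologyOfFree R r Q) (hx : IsSMulRegular Q x) :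
    IsHomologyOfFree R (r + r) (QuotSMulTop x Q) := by
  obtain ⟨d, hd, ⟨H⟩⟩ := h
  exact of_linearEquiv ((LinearEquiv.sumArrowLequivProdArrow _ _ R R).symm ≪≫ₗ
      LinearEquiv.funCongrLeft R R finSumFinEquiv.symm) (cone_comp_self x hd)
    (coneHomologyEquiv x hd ((H.isSMulRegular_congr x).2 hx) ≪≫ₗ QuotSMulTop.congr x H)

lemma quotient_sup_span {I : Ideal R} {x : R} (h : IsHomologyOfFree R r (R ⧸ I))
    (hx : IsSMulRegular (R ⧸ I) x) : IsHomologyOfFree R (r + r) (R ⧸ (I ⊔ Ideal.span {x})) :=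
  (h.quotSMulTop hx).congr (I.quotSMulTopEquivQuotientSup x)

end IsHomologyOfFree

lemma isHomologyOfFree_two {u v : R} (hv : IsSMulRegular R v)
    (hu : IsSMulRegular (R ⧸ Ideal.span {v}) u) :
    IsHomologyOfFree R 2 (R ⧸ Ideal.span {u, v}) :=
  ⟨_, comp_comp_self_eq_zero (range_pairIncl hv hu),
    ⟨(homologyEquivOfExact (pairIncl_injective hv) (range_pairIncl hv hu)).symm ≪≫ₗ
      quotEquivOfEq _ _ (range_pairProj u v)⟩⟩

end DifferentialModule

namespace MvPolynomial

open DifferentialModule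

variable {R : Type*} [CommRing R]

lemma isSMulRegular_X_quotient_span_X_image {σ : Type*} {s : Set σ} {i : σ} (hi : i ∉ s) :
    IsSMulRegular (MvPolynomial σ R ⧸ Ideal.span (X '' s : Set (MvPolynomial σ R)))
      (X i : MvPolynomial σ R) := by
  refine (isSMulRegular_quotient_iff_mem_of_smul_mem _ _).2 fun a h => ?_
  rw [smul_eq_mul, mem_ideal_span_X_image] at h
  rw [mem_ideal_span_X_image]
  intro m hm
  obtain ⟨j, hjs, hj⟩ := h _ (by rw [support_X_mul]; exact Finset.mem_map_of_mem _ hm)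
  have hji : i ≠ j := fun h => hi (h ▸ hjs)
  exact ⟨j, hjs, by simpa [Finsupp.single_apply, hji] using hj⟩

variable (R) in
lemma span_X_image_lt_succ {n j : ℕ} (hj : j < n) :
    Ideal.span (X '' {i : Fin n | (i : ℕ) < j + 1} : Set (MvPolynomial (Fin n) R)) =
      Ideal.span (X '' {i : Fin n | (i : ℕ) < j}) ⊔ Ideal.span {X ⟨j, hj⟩} := by
  have : {i : Fin n | (i : ℕ) < j + 1} = insert ⟨j, hj⟩ {i : Fin n | (i : ℕ) < j} := by
    ext i
    simp only [Set.mem_ofPred_eq, Set.mem_insert_iff, Fin.ext_iff]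
    omega
  rw [this, Set.image_insert_eq, Ideal.span_insert, sup_comm]

lemma isHomologyOfFree_span_X_lt {n j : ℕ} (hj : 2 ≤ j) (hjn : j ≤ n) :
    IsHomologyOfFree (MvPolynomial (Fin n) R) (2 ^ (j - 1))
      (MvPolynomial (Fin n) R ⧸
        Ideal.span (X '' {i : Fin n | (i : ℕ) < j} : Set (MvPolynomial (Fin n) R))) := by
  induction j, hj using Nat.le_induction with
  | base =>
    have : {i : Fin n | (i : ℕ) < 2} = {⟨0, by omega⟩, ⟨1, hjn⟩} := by
      ext i
      simp only [Set.mem_ofPred_eq, Set.mem_insert_iff, Set.mem_singleton_iff, Fin.ext_iff]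
      omega
    rw [this, Set.image_pair]
    refine isHomologyOfFree_two isRegular_X.left.isSMulRegular ?_
    rw [← Set.image_singleton]
    exact isSMulRegular_X_quotient_span_X_image (by simp)
  | succ j hj ih =>
    have hjn' : j < n := hjn
    rw [span_X_image_lt_succ R hjn', show 2 ^ (j + 1 - 1) = 2 ^ (j - 1) + 2 ^ (j - 1) by
      rw [← two_mul, ← pow_succ']; congr 1; omega]
    exact (ih hjn'.le).quotient_sup_span (isSMulRegular_X_quotient_span_X_image (by simp))

end MvPolynomial

end

/-- for each `n ≥ 2` there is a free differential module of rank `2^(n−1)`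
over `S = k[x₁,…,x_n]` whose homology `ker d ⧸ im d` is isomorphic to
`k = S/(x₁,…,x_n)`. -/
theorem stmt9 (k : Type) [Field k] (n : ℕ) (hn : 2 ≤ n) :
    ∃ d : (Fin (2 ^ (n - 1)) → MvPolynomial (Fin n) k) →ₗ[MvPolynomial (Fin n) k]
        (Fin (2 ^ (n - 1)) → MvPolynomial (Fin n) k),
      d ∘ₗ d = 0 ∧
      Nonempty ((LinearMap.ker d ⧸ (LinearMap.range d).comap (LinearMap.ker d).subtype)
        ≃ₗ[MvPolynomial (Fin n) k]
        MvPolynomial (Fin n) k ⧸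
          Ideal.span (Set.range (X : Fin n → MvPolynomial (Fin n) k))) := by
  have h := isHomologyOfFree_span_X_lt (R := k) hn le_rfl
  rwa [show {i : Fin n | (i : ℕ) < n} = Set.univ from Set.eq_univ_of_forall Fin.isLt,
    Set.image_univ] at h
end

section
/- Let R be a commutative ring of characteristic 2 (or more generally any commutative ring), let T = ⋀•E be the exterior algebra on a finitely generated free R-module E, viewed as a graded module over its graded dual. Given elements fᵢ ∈ (⋀ⁱE)* for i ≥ 1 such that fᵢ·fⱼ = 0 whenever i and j are both even, define maps A_{i,j} : ⋀ⁱE → ⋀ʲE for j < i by A_{i,j} = (−1)^{ij} f_{i−j} (left contraction/multiplication). Then for all j < i, the relation Σ_{j < k < i} A_{k,j} ∘ A_{i,k} = 0 holds; equivalently, the map d = Σ A_{i,j} is a square-zero endomorphism of ⊕ᵢ ⋀ⁱE, so this data determines a differential module. -/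
/-!
The terms of the sum pair off under `k ↦ i + j - k`.  Writing `a = k - j` and `b = i - k`, the
term for `k` is a signed `f a * f b` and that of its partner a signed `f b * f a`.  If `a` and `b`
are both even, both products vanish; otherwise graded commutativity turns the second into the
negative of the first, the total exponent being `(2j + a + b)² + ab ≡ (a + 1)(b + 1) - 1 (mod 2)`.
The middle term `k = (i + j)/2` is fixed by the pairing and is a multiple of `f a * f a`, which
vanishes whether `a` is odd or even.
-/

lemma neg_one_pow_eq_neg_of_odd_add {m n : ℕ} (h : Odd (m + n)) :
    (-1 : ℤ) ^ m = -(-1) ^ n := by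
  have hm : (-1 : ℤ) ^ m = (-1) ^ (m + n) * (-1) ^ n := by
    rw [mul_comm, ← pow_add, add_left_comm, ← two_mul, pow_add, pow_mul]
    simp
  rw [hm, h.neg_one_pow, neg_one_mul]

lemma odd_sq_add_mul_of_odd_or_odd {a b : ℕ} (j : ℕ) (h : Odd a ∨ Odd b) :
    Odd ((2 * j + a + b) ^ 2 + a * b) := by
  simp only [Nat.even_pow, Nat.even_add, Nat.even_mul, even_two_mul, ← Nat.not_even_iff_odd]
    at h ⊢
  tauto

section GradedCommutative

variable {A : Type*} [Ring A] (f : ℕ → A)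

lemma signed_mul_add_signed_mul_swap_eq_zero
    (hcomm : ∀ a b : ℕ, f a * f b = ((-1 : ℤ) ^ (a * b)) • (f b * f a))
    (heven : ∀ a b : ℕ, Even a → Even b → f a * f b = 0) (j a b : ℕ) :
    (((-1 : ℤ) ^ ((j + a) * j)) • f a) * (((-1 : ℤ) ^ ((j + a + b) * (j + a))) • f b)
      + (((-1 : ℤ) ^ ((j + b) * j)) • f b) * (((-1 : ℤ) ^ ((j + a + b) * (j + b))) • f a)
      = 0 := by
  rw [smul_mul_smul_comm, smul_mul_smul_comm, ← pow_add, ← pow_add]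
  by_cases hab : Even a ∧ Even b
  · simp [heven a b hab.1 hab.2, heven b a hab.2 hab.1]
  have hodd : Odd a ∨ Odd b := by
    simpa only [not_and_or, Nat.not_even_iff_odd] using hab
  have hexp : Odd ((j + a) * j + (j + a + b) * (j + a) + a * b
      + ((j + b) * j + (j + a + b) * (j + b))) := by
    convert odd_sq_add_mul_of_odd_or_odd j hodd using 1
    ring
  rw [hcomm a b, smul_smul, ← pow_add, neg_one_pow_eq_neg_of_odd_add hexp, neg_smul,
    neg_add_cancel]

lemma signed_mul_self_eq_zero (hodd : ∀ a : ℕ, Odd a → f a * f a = 0)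
    (heven : ∀ a b : ℕ, Even a → Even b → f a * f b = 0) (s t : ℤ) (a : ℕ) :
    (s • f a) * (t • f a) = 0 := by
  rw [smul_mul_smul_comm]
  rcases Nat.even_or_odd a with ha | ha
  · rw [heven a a ha ha, smul_zero]
  · rw [hodd a ha, smul_zero]

end GradedCommutative

/-- let `T = ⋀•E` (abstracted here as a module `D` equipped with the
action of the graded-dual algebra: a family of commuting-up-to-sign operators
`f i` of degree `−i`, satisfying the relations that hold for multiplication by dual
exterior forms: graded commutativity `f a ∘ f b = (−1)^(ab) f b ∘ f a`, squares of odd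
elements vanish, and — the hypothesis of the proposition — `f a ∘ f b = 0` whenever `a`
and `b` are both even).  Then the maps `A i j = (−1)^(ij) f (i−j)` satisfy
`∑_{j<k<i} A k j ∘ A i k = 0` for all `j < i`; i.e. this data determines a
differential module. -/
theorem stmt11 {R D : Type*} [CommRing R] [AddCommGroup D] [Module R D]
    (f : ℕ → Module.End R D)
    (hcomm : ∀ a b : ℕ, f a * f b = ((-1 : ℤ) ^ (a * b)) • (f b * f a))
    (hodd : ∀ a : ℕ, Odd a → f a * f a = 0)
    (heven : ∀ a b : ℕ, Even a → Even b → f a * f b = 0) :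
    ∀ i j : ℕ, j < i →
      ∑ k ∈ Finset.Ioo j i,
        ((((-1 : ℤ) ^ (k * j)) • f (k - j)) * (((-1 : ℤ) ^ (i * k)) • f (i - k))) = 0 := by
  intro i j _
  refine Finset.sum_involution (fun k _ => i + j - k) ?pair ?fixed ?mem ?invol
  case pair =>
    intro k hk
    obtain ⟨hjk, hki⟩ := Finset.mem_Ioo.mp hk
    obtain ⟨a, rfl⟩ : ∃ a, k = j + a := ⟨k - j, by omega⟩
    obtain ⟨b, rfl⟩ : ∃ b, i = j + a + b := ⟨i - (j + a), by omega⟩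
    rw [show j + a + b + j - (j + a) = j + b by omega, show j + a + b - (j + b) = a by omega,
      Nat.add_sub_cancel_left, Nat.add_sub_cancel_left, Nat.add_sub_cancel_left]
    exact signed_mul_add_signed_mul_swap_eq_zero f hcomm heven j a b
  case fixed =>
    intro k hk hne hfix
    obtain ⟨hjk, hki⟩ := Finset.mem_Ioo.mp hk
    rw [show k - j = i - k by omega] at hne
    exact hne (signed_mul_self_eq_zero f hodd heven _ _ _)
  case mem =>
    intro k hk
    simp only [Finset.mem_Ioo] at hk ⊢
    omega
  case invol =>
    intro k hk
    simp only [Finset.mem_Ioo] at hk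
    omega
end

section
/- Let R = k[x₁,…,x₄] with k a field of characteristic ≠ 2, E = R⁴ with basis e₁,…,e₄, and define on ⋀•E the block maps A_{1,0} = A_{2,1} = A_{3,2} = A_{4,3} = contraction by x₁³e₁* + x₂³e₂* + x₃³e₃* + x₄³e₄*, A_{2,0} = −A_{3,1} = A_{4,2} = contraction by x₁x₂e₁₂* + x₂²e₃₄*, A_{3,0} = contraction by −2x₁e₁₃₄*, and A_{4,1} = A_{4,0} = 0. Then the resulting endomorphism of ⊕ᵢ⋀ⁱE squares to zero (so this data defines a free flag differential module), yet A_{3,0} ≠ A_{4,1}, so the flag is not of the form K(f₁,f₂,f₃,f₄) where each A_{i,j} = (−1)^{ij}f_{i−j} for a single choice of elements fᵢ ∈ (⋀ⁱE)*. -/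
open MvPolynomial

namespace Stmt19

variable (k : Type) [Field k]

/-- `R = k[x₁,…,x₄]`. -/
abbrev R (k : Type) [Field k] := MvPolynomial (Fin 4) k

/-- `A_{1,0} = A_{2,1}† …`: the first Koszul matrix on `(x₁³, x₂³, x₃³, x₄³)`;
`⋀¹E → ⋀⁰E` in bases `(e₁,…,e₄)` and `(1)`. -/
noncomputable def A10 : Matrix (Fin 1) (Fin 4) (R k) :=
  !![X 0 ^ 3, X 1 ^ 3, X 2 ^ 3, X 3 ^ 3]

/-- `A_{2,1} : ⋀²E → ⋀¹E`, the second Koszul matrix, with `⋀²`-basis ordered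
`(e₁₂, e₁₃, e₁₄, e₂₃, e₂₄, e₃₄)`. -/
noncomputable def A21 : Matrix (Fin 4) (Fin 6) (R k) :=
  !![-X 1 ^ 3, -X 2 ^ 3, -X 3 ^ 3, 0,       0,       0;
     X 0 ^ 3,  0,        0,        -X 2 ^ 3, -X 3 ^ 3, 0;
     0,        X 0 ^ 3,  0,        X 1 ^ 3,  0,        -X 3 ^ 3;
     0,        0,        X 0 ^ 3,  0,        X 1 ^ 3,  X 2 ^ 3]

/-- `A_{3,2} : ⋀³E → ⋀²E`, the third Koszul matrix, with `⋀³`-basis ordered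
`(e₁₂₃, e₁₂₄, e₁₃₄, e₂₃₄)`. -/
noncomputable def A32 : Matrix (Fin 6) (Fin 4) (R k) :=
  !![X 2 ^ 3,  X 3 ^ 3,  0,        0;
     -X 1 ^ 3, 0,        X 3 ^ 3,  0;
     0,        -X 1 ^ 3, -X 2 ^ 3, 0;
     X 0 ^ 3,  0,        0,        X 3 ^ 3;
     0,        X 0 ^ 3,  0,        -X 2 ^ 3;
     0,        0,        X 0 ^ 3,  X 1 ^ 3]

/-- `A_{4,3} : ⋀⁴E → ⋀³E`, the last Koszul matrix. -/
noncomputable def A43 : Matrix (Fin 4) (Fin 1) (R k) :=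
  !![-X 3 ^ 3; X 2 ^ 3; -X 1 ^ 3; X 0 ^ 3]

/-- `A_{2,0}`, contraction by `x₁x₂·e₁₂* + x₂²·e₃₄*` on `⋀²E`. -/
noncomputable def A20 : Matrix (Fin 1) (Fin 6) (R k) :=
  !![X 0 * X 1, 0, 0, 0, 0, X 1 ^ 2]

/-- `A_{3,1} = −(contraction by x₁x₂·e₁₂* + x₂²·e₃₄*)` on `⋀³E`. -/
noncomputable def A31 : Matrix (Fin 4) (Fin 4) (R k) :=
  !![0,          0,          -X 1 ^ 2, 0;
     0,          0,          0,        -X 1 ^ 2;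
     -X 0 * X 1, 0,          0,        0;
     0,          -X 0 * X 1, 0,        0]

/-- `A_{4,2}`, contraction by `x₁x₂·e₁₂* + x₂²·e₃₄*` on `⋀⁴E`. -/
noncomputable def A42 : Matrix (Fin 6) (Fin 1) (R k) :=
  !![X 1 ^ 2; 0; 0; 0; 0; X 0 * X 1]

/-- `A_{3,0}`, given by `−2x₁·e₁₃₄*`. -/
noncomputable def A30 : Matrix (Fin 1) (Fin 4) (R k) :=
  !![0, 0, 2 * X 0, 0]

/-- `A_{4,1} = 0`. -/
noncomputable def A41 : Matrix (Fin 4) (Fin 1) (R k) := 0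

/-- `A_{4,0} = 0`. -/
noncomputable def A40 : Matrix (Fin 1) (Fin 1) (R k) := 0

/-- Contraction `⋀³E → ⋀⁰E` by an element `f₃ = Σ c_T e_T* ∈ (⋀³E)*`, with the
`⋀³`-basis ordered `(e₁₂₃, e₁₂₄, e₁₃₄, e₂₃₄)`. -/
noncomputable def contr3to0 (c : Fin 4 → R k) : Matrix (Fin 1) (Fin 4) (R k) :=
  !![c 0, c 1, c 2, c 3]

/-- Contraction `⋀⁴E → ⋀¹E` by the same element `f₃ = Σ c_T e_T*`:
`f₃ ⌟ e₁₂₃₄ = c₂₃₄ e₁ − c₁₃₄ e₂ + c₁₂₄ e₃ − c₁₂₃ e₄`. -/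
noncomputable def contr3to1 (c : Fin 4 → R k) : Matrix (Fin 4) (Fin 1) (R k) :=
  !![c 3; -c 2; c 1; -c 0]

theorem A10_mul_A21_eq_zero : A10 k * A21 k = 0 := by
  ext i j : 1
  fin_cases i; fin_cases j <;> simp [A10, A21] <;> ring

theorem A21_mul_A32_eq_zero : A21 k * A32 k = 0 := by
  ext i j : 1
  fin_cases i <;> fin_cases j <;> simp [A21, A32] <;> ring

theorem A32_mul_A43_eq_zero : A32 k * A43 k = 0 := by
  ext i j : 1
  fin_cases i <;> fin_cases j <;> simp [A32, A43] <;> ring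

theorem A10_mul_A31_add_A20_mul_A32_eq_zero : A10 k * A31 k + A20 k * A32 k = 0 := by
  ext i j : 1
  fin_cases i; fin_cases j <;> simp [A10, A31, A20, A32] <;> ring

theorem A21_mul_A42_add_A31_mul_A43_eq_zero : A21 k * A42 k + A31 k * A43 k = 0 := by
  ext i j : 1
  fin_cases i <;> fin_cases j <;> simp [A21, A42, A31, A43] <;> ring

/-- `A₂₀A₄₂` is contraction by `f₂ ∧ f₂ = 2x₁x₂³e₁₂₃₄*`, which need not vanish since `f₂` has
even degree; `A₃₀A₄₃` cancels it. -/
theorem A10_mul_A41_add_A20_mul_A42_add_A30_mul_A43_eq_zero :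
    A10 k * A41 k + A20 k * A42 k + A30 k * A43 k = 0 := by
  ext i j : 1
  fin_cases i; fin_cases j
  simp [A10, A41, A20, A42, A30, A43]
  ring

variable {k} in
theorem not_exists_contr3_eq_A30_and_A41 (hchar : (2 : k) ≠ 0) :
    ¬ ∃ c : Fin 4 → R k, A30 k = contr3to0 k c ∧ A41 k = contr3to1 k c := by
  rintro ⟨c, hA30, hA41⟩
  have hc_A30 : c 2 = 2 * X 0 := by
    simpa [A30, contr3to0] using (congrFun (congrFun hA30 0) 2).symm
  have hc_A41 : c 2 = 0 := by
    simpa [A41, contr3to1] using congrFun (congrFun hA41 1) 0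
  have h2 : (2 : R k) ≠ 0 := by
    rw [← map_ofNat C 2]
    exact C_ne_zero.mpr hchar
  exact mul_ne_zero h2 (X_ne_zero 0) (hc_A30 ▸ hc_A41)

/-- over `R = k[x₁,…,x₄]` with `char k ≠ 2`, the block maps above define
a free flag differential module on `⋀•E` (the endomorphism squares to zero, i.e. all
relations `∑_{j<k<i} A_{k,j} A_{i,k} = 0` hold), yet there is no single element
`f₃ ∈ (⋀³E)*` whose contraction gives both `A_{3,0}` and `A_{4,1}`; so this flag is
not of the Koszul form `K(f₁, f₂, f₃, f₄)`. -/
theorem stmt19 (hchar : (2 : k) ≠ 0) :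
    (A10 k * A21 k = 0) ∧
    (A21 k * A32 k = 0) ∧
    (A32 k * A43 k = 0) ∧
    (A10 k * A31 k + A20 k * A32 k = 0) ∧
    (A21 k * A42 k + A31 k * A43 k = 0) ∧
    (A10 k * A41 k + A20 k * A42 k + A30 k * A43 k = 0) ∧
    ¬ ∃ c : Fin 4 → R k, A30 k = contr3to0 k c ∧ A41 k = contr3to1 k c :=
  ⟨A10_mul_A21_eq_zero k, A21_mul_A32_eq_zero k, A32_mul_A43_eq_zero k,
    A10_mul_A31_add_A20_mul_A32_eq_zero k, A21_mul_A42_add_A31_mul_A43_eq_zero k,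
    A10_mul_A41_add_A20_mul_A42_add_A30_mul_A43_eq_zero k,
    not_exists_contr3_eq_A30_and_A41 hchar⟩

end Stmt19
end
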